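/- For the curvature-of-indicatrix tensor defined by R̂_i{}^j{}_{mn} = (1/K²)(A_h{}^j{}_m A_i{}^h{}_n - A_h{}^j{}_n A_i{}^h{}_m) with the Cartan tensor of the special algebraic form A_{ijk} = (1/N)(h_{ij}A_k + h_{ik}A_j + h_{jk}A_i - A_iA_jA_k/⟨A,A⟩) and h_{ij}A^j = A_i, h_i{}^k h_{kj} = h_{ij}, one obtains R̂_{ijmn} = -(⟨A,A⟩/N²)(h_{im}h_{jn} - h_{in}h_{jm})/K². -/

import Mathlib

/-!
Up to the factor `1 / N`, the covector `A_{·ab}` is the vector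
`T_{ab} = A_b h_a + A_a h_b + (h_{ab} - A_a A_b / ⟨A,A⟩) A`, where `h_a` is the `a`-th row of `h`,
so the contraction `g^{pl} A_{ljm} A_{ipn}` is `g(T_{in}, T_{jm}) / N²`. The Gram matrix of the
`h_a` and `A` is `h`, `A` and `⟨A,A⟩` by `h ∘ h = h` and `h(A) = A`; after antisymmetrising in
`m, n` every term containing `A` cancels and only `-⟨A,A⟩ (h_{im} h_{jn} - h_{in} h_{jm})` survives.
-/

open Finset Matrix

section SpecialCartan

variable {𝕜 V ι : Type*} [Field 𝕜] [AddCommGroup V] [Module 𝕜 V]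

/-- `N A_{·ab}` for the special Cartan tensor, with `u a` in the role of `h_a` and `v` of `A`;
all the scalars `h_{ab}`, `A_a`, `⟨A,A⟩` are read off from `B`. -/
noncomputable def specialCartan (B : LinearMap.BilinForm 𝕜 V) (u : ι → V) (v : V) (a b : ι) : V :=
  B (u b) v • u a + B (u a) v • u b + (B (u a) (u b) - B (u a) v * B (u b) v / B v v) • v

theorem specialCartan_antisymm {B : LinearMap.BilinForm 𝕜 V} (hB : B.IsSymm) (u : ι → V)
    {v : V} (hv : B v v ≠ 0) (i j m n : ι) :
    B (specialCartan B u v i n) (specialCartan B u v j m) -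
        B (specialCartan B u v i m) (specialCartan B u v j n) =
      -B v v * (B (u i) (u m) * B (u j) (u n) - B (u i) (u n) * B (u j) (u m)) := by
  simp only [specialCartan, map_add, map_smul, LinearMap.add_apply, LinearMap.smul_apply,
    smul_eq_mul, hB.eq v (u _), hB.eq (u n) (u j), hB.eq (u m) (u j), hB.eq (u n) (u m)]
  field_simp
  ring

end SpecialCartan

section RowsOfIdempotent

variable {ι : Type*} [Fintype ι] [DecidableEq ι] {g h : Matrix ι ι ℝ}

theorem toBilin'_rows_eq (hh : h.IsSymm)
    (hidem : ∀ i j, (∑ k, ∑ l, h i k * g k l * h l j) = h i j) (a b : ι) :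
    g.toBilin' (h a) (h b) = h a b := by
  rw [Matrix.toBilin'_apply, ← hidem]
  exact sum_congr rfl fun k _ => sum_congr rfl fun l _ => by rw [hh.apply l b]

theorem toBilin'_row_left_eq {A : ι → ℝ} (hhA : ∀ i, (∑ j, h i j * (g *ᵥ A) j) = A i) (a : ι) :
    g.toBilin' (h a) A = A a := by
  rw [Matrix.toBilin'_apply', ← hhA]
  rfl

theorem specialCartan_toBilin'_apply (hh : h.IsSymm)
    (hidem : ∀ i j, (∑ k, ∑ l, h i k * g k l * h l j) = h i j) {A : ι → ℝ}
    (hhA : ∀ i, (∑ j, h i j * (g *ᵥ A) j) = A i) (a b l : ι) :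
    specialCartan g.toBilin' h A a b l =
      h l a * A b + h l b * A a + h a b * A l - A l * A a * A b / g.toBilin' A A := by
  simp only [specialCartan, toBilin'_rows_eq hh hidem, toBilin'_row_left_eq hhA, Pi.add_apply,
    Pi.smul_apply, smul_eq_mul, hh.apply a l, hh.apply b l]
  ring

end RowsOfIdempotent

theorem indicatrix_curvature_special_form_general (N : ℕ)
    (ginv : Matrix (Fin N) (Fin N) ℝ) (hginv : ginv.IsSymm)
    (h : Matrix (Fin N) (Fin N) ℝ) (hsymm : h.IsSymm)
    (hidem : ∀ i j, (∑ k, ∑ l, h i k * ginv k l * h l j) = h i j)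
    (A Aup : Fin N → ℝ) (hAup : Aup = ginv.mulVec A)
    (hhA : ∀ i, (∑ j, h i j * Aup j) = A i)
    (c : ℝ) (hc : c = ∑ k, A k * Aup k) (hcne : c ≠ 0)
    (K : ℝ)
    (A3 : Fin N → Fin N → Fin N → ℝ)
    (hA3 : ∀ i j k, A3 i j k =
      (1 / (N : ℝ)) * (h i j * A k + h i k * A j + h j k * A i - A i * A j * A k / c)) :
    ∀ i j m n,
      (1 / K ^ 2) * (∑ p, ∑ l, ginv p l * (A3 l j m * A3 i p n - A3 l j n * A3 i p m)) =
        -(c / (N : ℝ) ^ 2) * (h i m * h j n - h i n * h j m) / K ^ 2 := by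
  subst hAup
  set B := ginv.toBilin'
  have hBA : B A A = c := by rw [Matrix.toBilin'_apply', hc, dotProduct]
  have hA3_left : ∀ a b l, A3 l a b = 1 / N * specialCartan B h A a b l := fun a b l => by
    rw [specialCartan_toBilin'_apply hsymm hidem hhA, hBA, hA3]
  have hA3_mid : ∀ a b p, A3 a p b = 1 / N * specialCartan B h A a b p := fun a b p => by
    rw [specialCartan_toBilin'_apply hsymm hidem hhA, hBA, hA3, hsymm.apply a p]
    ring
  intro i j m n
  have hcontract : (∑ p, ∑ l, ginv p l * (A3 l j m * A3 i p n - A3 l j n * A3 i p m)) =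
      (1 / N) ^ 2 * (B (specialCartan B h A i n) (specialCartan B h A j m) -
        B (specialCartan B h A i m) (specialCartan B h A j n)) := by
    simp only [B, Matrix.toBilin'_apply, mul_sub, ← sum_sub_distrib, mul_sum]
    refine sum_congr rfl fun p _ => sum_congr rfl fun l _ => ?_
    rw [hA3_left j m l, hA3_left j n l, hA3_mid i n p, hA3_mid i m p]
    ring
  rw [hcontract, specialCartan_antisymm (Matrix.isSymm_toBilin'_iff_isSymm.mpr hginv) h
    (hBA ▸ hcne), hBA]
  simp only [toBilin'_rows_eq hsymm hidem]
  ring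

theorem indicatrix_curvature_special_form (N : ℕ) (hN : 0 < N)
    (ginv : Matrix (Fin N) (Fin N) ℝ) (hginv : ginv.IsSymm)
    (h : Matrix (Fin N) (Fin N) ℝ) (hsymm : h.IsSymm)
    (hidem : ∀ i j, (∑ k, ∑ l, h i k * ginv k l * h l j) = h i j)
    (A Aup : Fin N → ℝ) (hAup : Aup = ginv.mulVec A)
    (hhA : ∀ i, (∑ j, h i j * Aup j) = A i)
    (c : ℝ) (hc : c = ∑ k, A k * Aup k) (hcne : c ≠ 0)
    (K : ℝ) (hK : 0 < K)
    (A3 : Fin N → Fin N → Fin N → ℝ)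
    (hA3 : ∀ i j k, A3 i j k =
      (1 / (N : ℝ)) * (h i j * A k + h i k * A j + h j k * A i - A i * A j * A k / c)) :
    ∀ i j m n,
      (1 / K ^ 2) * (∑ p, ∑ l, ginv p l * (A3 l j m * A3 i p n - A3 l j n * A3 i p m)) =
        -(c / (N : ℝ) ^ 2) * (h i m * h j n - h i n * h j m) / K ^ 2 :=
  indicatrix_curvature_special_form_general N ginv hginv h hsymm hidem A Aup hAup hhA c hc hcne K A3
    hA3
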